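/- arXiv:2103.01757 — 2 statements merged into one kernel-verified Lean document; each statement's English description precedes it below -/
import Mathlib

section
/- Discrete Hamilton's principle is equivalent to the discrete Euler–Lagrange equations: for a discrete trajectory q_0, …, q_N in ℝⁿ, one has δS_d(q; v) = 0 for every variation v_0, …, v_N with v_0 = v_N = 0 if and only if ∇₁L_d(q_k, q_{k+1}) + ∇₂L_d(q_{k−1}, q_k) = 0 for every k ∈ {1, …, N−1}. -/
/-!
Differentiating the action term by term and shifting the index of the `∇₂L_d` terms
(a discrete integration by parts whose boundary terms vanish because `v 0 = v N = 0`) gives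
`δS_d(q; v) = ∑ k, ⟪∇₁L_d(q_k, q_{k+1}) + ∇₂L_d(q_{k-1}, q_k), v_k⟫`.
This vanishes for all such `v` iff each coefficient with `0 < k < N` does:
test against `v` supported at a single `k`.
-/

open scoped RealInnerProductSpace

open Finset

theorem Finset.sum_range_comp_succ_eq_of_eq_zero {M : Type*} [AddCommMonoid M] {g : ℕ → M}
    {N : ℕ} (h0 : g 0 = 0) (hN : g N = 0) :
    ∑ k ∈ range N, g (k + 1) = ∑ k ∈ range N, g k := by
  simpa [h0, hN] using (sum_range_succ' g N).symm.trans (sum_range_succ g N)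

section Variation

variable {E F : Type*} [NormedAddCommGroup E] [InnerProductSpace ℝ E]
  [NormedAddCommGroup F] [InnerProductSpace ℝ F]

theorem inner_gradient_comp_prodMk_left [CompleteSpace E] {f : E × F → ℝ} {a : E} {b : F}
    (hf : DifferentiableAt ℝ f (a, b)) (u : E) :
    ⟪gradient (fun x => f (x, b)) a, u⟫ = fderiv ℝ f (a, b) (u, 0) := by
  have hpartial : HasFDerivAt (fun x => f (x, b)) ((fderiv ℝ f (a, b)).comp (.inl ℝ E F)) a :=
    hf.hasFDerivAt.comp a (hasFDerivAt_prodMk_left a b)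
  rw [inner_gradient_left, hpartial.fderiv]
  simp

theorem inner_gradient_comp_prodMk_right [CompleteSpace F] {f : E × F → ℝ} {a : E} {b : F}
    (hf : DifferentiableAt ℝ f (a, b)) (w : F) :
    ⟪gradient (fun y => f (a, y)) b, w⟫ = fderiv ℝ f (a, b) (0, w) := by
  have hpartial : HasFDerivAt (fun y => f (a, y)) ((fderiv ℝ f (a, b)).comp (.inr ℝ E F)) b :=
    hf.hasFDerivAt.comp b (hasFDerivAt_prodMk_right a b)
  rw [inner_gradient_left, hpartial.fderiv]
  simp

theorem DifferentiableAt.hasDerivAt_comp_add_smul_prodMk [CompleteSpace E] [CompleteSpace F]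
    {f : E × F → ℝ} {a : E} {b : F}
    (hf : DifferentiableAt ℝ f (a, b)) (u : E) (w : F) :
    HasDerivAt (fun ε : ℝ => f (a + ε • u, b + ε • w))
      (⟪gradient (fun x => f (x, b)) a, u⟫ + ⟪gradient (fun y => f (a, y)) b, w⟫) 0 := by
  have hline : HasDerivAt (fun ε : ℝ => (a + ε • u, b + ε • w)) (u, w) 0 := by
    simpa using (((hasDerivAt_id' (0 : ℝ)).smul_const u).const_add a).prodMk
      (((hasDerivAt_id' (0 : ℝ)).smul_const w).const_add b)
  rw [inner_gradient_comp_prodMk_left hf, inner_gradient_comp_prodMk_right hf, ← map_add,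
    Prod.mk_add_mk, add_zero, zero_add]
  exact hf.hasFDerivAt.comp_hasDerivAt_of_eq 0 hline (by simp)

end Variation

section DiscreteAction

variable {E : Type*} [NormedAddCommGroup E] [InnerProductSpace ℝ E]

-- At `k = 0` the second gradient sits at the junk point `q (0 - 1) = q 0`,
-- but is paired with `v 0 = 0`.
theorem hasDerivAt_discrete_action_variation [CompleteSpace E] {N : ℕ} {L : E → E → ℝ}
    (hL : Differentiable ℝ (fun p : E × E => L p.1 p.2)) (q : ℕ → E) {v : ℕ → E}
    (hv0 : v 0 = 0) (hvN : v N = 0) :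
    HasDerivAt
      (fun ε : ℝ => ∑ k ∈ range N, L (q k + ε • v k) (q (k + 1) + ε • v (k + 1)))
      (∑ k ∈ range N, ⟪gradient (fun x => L x (q (k + 1))) (q k)
        + gradient (fun y => L (q (k - 1)) y) (q k), v k⟫) 0 := by
  have hterm := fun k (_ : k ∈ range N) =>
    (hL (q k, q (k + 1))).hasDerivAt_comp_add_smul_prodMk (v k) (v (k + 1))
  beta_reduce at hterm
  refine (HasDerivAt.fun_sum hterm).congr_deriv ?_
  have hshift := sum_range_comp_succ_eq_of_eq_zero (N := N)
    (g := fun j => ⟪gradient (fun y => L (q (j - 1)) y) (q j), v j⟫)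
    (by simp [hv0]) (by simp [hvN])
  simp only [Nat.add_sub_cancel] at hshift
  simp only [sum_add_distrib, inner_add_left, hshift]

theorem forall_sum_inner_eq_zero_iff {N : ℕ} (e : ℕ → E) :
    (∀ v : ℕ → E, v 0 = 0 → v N = 0 → ∑ k ∈ range N, ⟪e k, v k⟫ = 0)
      ↔ ∀ k, 1 ≤ k → k < N → e k = 0 := by
  constructor
  · intro h k hk1 hkN
    have hsum := h (fun j => if j = k then e k else 0) (if_neg (by omega)) (if_neg (by omega))
    simpa [apply_ite, mem_range.2 hkN] using hsum
  · intro h v hv0 _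
    refine sum_eq_zero fun k hk => ?_
    rcases Nat.eq_zero_or_pos k with rfl | hk1
    · simp [hv0]
    · simp [h k hk1 (mem_range.1 hk)]

end DiscreteAction

theorem discrete_hamilton_iff_discrete_euler_lagrange_general {n N : ℕ}
    (L : EuclideanSpace ℝ (Fin n) → EuclideanSpace ℝ (Fin n) → ℝ)
    (hL : Differentiable ℝ
      (fun p : EuclideanSpace ℝ (Fin n) × EuclideanSpace ℝ (Fin n) => L p.1 p.2))
    (q : ℕ → EuclideanSpace ℝ (Fin n)) :
    (∀ v : ℕ → EuclideanSpace ℝ (Fin n), v 0 = 0 → v N = 0 →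
      deriv (fun ε : ℝ =>
        ∑ k ∈ Finset.range N, L (q k + ε • v k) (q (k + 1) + ε • v (k + 1))) 0 = 0)
    ↔ (∀ k, 1 ≤ k → k < N →
        gradient (fun x => L x (q (k + 1))) (q k)
          + gradient (fun y => L (q (k - 1)) y) (q k) = 0) := by
  rw [← forall_sum_inner_eq_zero_iff]
  refine forall₃_congr fun v hv0 hvN => ?_
  rw [(hasDerivAt_discrete_action_variation hL q hv0 hvN).deriv]

/-- Discrete Hamilton's principle is equivalent to the discrete Euler–Lagrange
equations: the variation of the discrete action vanishes for every variation
`v` with `v 0 = v N = 0` if and only if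
`∇₁L(q_k, q_{k+1}) + ∇₂L(q_{k-1}, q_k) = 0` for all `k ∈ {1, …, N-1}`. -/
theorem discrete_hamilton_iff_discrete_euler_lagrange {n N : ℕ} (hN : 1 ≤ N)
    (L : EuclideanSpace ℝ (Fin n) → EuclideanSpace ℝ (Fin n) → ℝ)
    (hL : Differentiable ℝ
      (fun p : EuclideanSpace ℝ (Fin n) × EuclideanSpace ℝ (Fin n) => L p.1 p.2))
    (q : ℕ → EuclideanSpace ℝ (Fin n)) :
    (∀ v : ℕ → EuclideanSpace ℝ (Fin n), v 0 = 0 → v N = 0 →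
      deriv (fun ε : ℝ =>
        ∑ k ∈ Finset.range N, L (q k + ε • v k) (q (k + 1) + ε • v (k + 1))) 0 = 0)
    ↔ (∀ k, 1 ≤ k → k < N →
        gradient (fun x => L x (q (k + 1))) (q k)
          + gradient (fun y => L (q (k - 1)) y) (q k) = 0) :=
  discrete_hamilton_iff_discrete_euler_lagrange_general L hL q
end

section
/- The duration of the collision equals π t_γ: assuming additionally v ≠ 0, the least positive real number t such that x(t) = d/2 is t = π t_γ. In particular, in the undamped case γ = 0 the collision duration is t_C = π √(m/(2k)). -/
/-! Since `v tγ exp(-γ t / m) ≠ 0`, the particle is back at `d/2` exactly when `sin (t / tγ) = 0`,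
and the first positive zero of `t ↦ sin (t / T)` is `π T`. -/

open Real

lemma isLeast_pos_zero_sin_div {T : ℝ} (hT : 0 < T) :
    IsLeast {t : ℝ | 0 < t ∧ sin (t / T) = 0} (π * T) := by
  refine ⟨⟨by positivity, by rw [mul_div_cancel_right₀ _ hT.ne', sin_pi]⟩, ?_⟩
  rintro t ⟨ht, hsin⟩
  obtain ⟨n, hn⟩ := sin_eq_zero_iff.mp hsin
  have hn_pos : (0 : ℝ) < n := by
    have : 0 < (n : ℝ) * π := hn ▸ div_pos ht hT
    exact pos_of_mul_pos_left this pi_pos.le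
  have hn_one : (1 : ℝ) ≤ n := by exact_mod_cast (show (0 : ℤ) < n by exact_mod_cast hn_pos)
  have ht_eq : t = n * π * T := by rw [hn, div_mul_cancel₀ _ hT.ne']
  rw [ht_eq]
  nlinarith [mul_pos pi_pos hT]

lemma sub_mul_eq_self_iff {a c s : ℝ} (hc : c ≠ 0) : a - c * s = a ↔ s = 0 := by
  rw [sub_eq_self, mul_eq_zero, or_iff_right hc]

lemma div_sub_div_sq_pos {m k γ : ℝ} (hm : 0 < m) (hγ2 : γ ^ 2 < 2 * k * m) :
    0 < 2 * k / m - γ ^ 2 / m ^ 2 := by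
  rw [sub_pos, div_lt_div_iff₀ (by positivity) hm]
  nlinarith

theorem hookean_collision_duration_general
    (m k γ v d : ℝ) (hm : 0 < m)
    (hγ2 : γ ^ 2 < 2 * k * m) (hv : v ≠ 0)
    (tγ : ℝ) (htγ : tγ = (Real.sqrt (2 * k / m - γ ^ 2 / m ^ 2))⁻¹)
    (x : ℝ → ℝ)
    (hx : ∀ t, x t = d / 2 - v * tγ * Real.exp (-γ * t / m) * Real.sin (t / tγ)) :
    IsLeast {t : ℝ | 0 < t ∧ x t = d / 2} (Real.pi * tγ) ∧
    (γ = 0 → Real.pi * tγ = Real.pi * Real.sqrt (m / (2 * k))) := by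
  have htγ_pos : 0 < tγ := by
    rw [htγ]
    exact inv_pos.mpr (sqrt_pos.mpr (div_sub_div_sq_pos hm hγ2))
  have hreturn : ∀ t, x t = d / 2 ↔ sin (t / tγ) = 0 := fun t => by
    rw [hx]
    exact sub_mul_eq_self_iff (mul_ne_zero (mul_ne_zero hv htγ_pos.ne') (exp_ne_zero _))
  refine ⟨?_, fun hγ0 => ?_⟩
  · simpa only [hreturn] using isLeast_pos_zero_sin_div htγ_pos
  · rw [htγ, hγ0, zero_pow two_ne_zero, zero_div, sub_zero, ← sqrt_inv, inv_div]

/-- The duration of the collision equals `π t_γ`: if `v ≠ 0`, the least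
positive time `t` with `x t = d/2` is `t = π t_γ`; in particular, for `γ = 0`
the collision duration is `t_C = π √(m/(2k))`. -/
theorem hookean_collision_duration
    (m k γ v d : ℝ) (hm : 0 < m) (hk : 0 < k) (hγ : 0 ≤ γ)
    (hγ2 : γ ^ 2 < 2 * k * m) (hv : v ≠ 0)
    (tγ : ℝ) (htγ : tγ = (Real.sqrt (2 * k / m - γ ^ 2 / m ^ 2))⁻¹)
    (x : ℝ → ℝ)
    (hx : ∀ t, x t = d / 2 - v * tγ * Real.exp (-γ * t / m) * Real.sin (t / tγ)) :
    IsLeast {t : ℝ | 0 < t ∧ x t = d / 2} (Real.pi * tγ) ∧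
    (γ = 0 → Real.pi * tγ = Real.pi * Real.sqrt (m / (2 * k))) :=
  hookean_collision_duration_general m k γ v d hm hγ2 hv tγ htγ x hx
end
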